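/- arXiv:1602.07502 — 3 statements merged into one kernel-verified Lean document; each statement's English description precedes it below -/
import Mathlib

section
/- In a cyclic operad with units, the partial composition is commutative: for operations f ∈ C(X), g ∈ C(Y), and elements x ∈ X, y ∈ Y with (X\{x}) ∩ (Y\{y}) = ∅, one has f ∘_{x,y} g = g ∘_{y,x} f. -/
/-- A (non-skeletal, entries-only) cyclic operad, presented in a "flattened" style:
operations carry a finite set of entry names (`fv`), bijections of variables act via
global permutations of ℕ, there are binary units `unit x y` and partial compositions
`comp f x y g` (= f ∘_{x,y} g), subject to the axioms (A1), (A2), (EQ), (U1)–(U3) of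
Definition 1.  Here `ren ρ f` corresponds to `f^{ρ⁻¹}` of the paper. -/
structure CyclicOperad where
  Op : Type
  fv : Op → Finset ℕ
  ren : (ℕ ≃ ℕ) → Op → Op
  fv_ren : ∀ (ρ : ℕ ≃ ℕ) (f : Op), fv (ren ρ f) = (fv f).image ρ
  ren_id : ∀ f, ren (Equiv.refl ℕ) f = f
  ren_comp : ∀ ρ τ f, ren ρ (ren τ f) = ren (τ.trans ρ) f
  unit : ℕ → ℕ → Op
  fv_unit : ∀ x y, x ≠ y → fv (unit x y) = {x, y}
  comp : Op → ℕ → ℕ → Op → Op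
  fv_comp : ∀ f x y g, x ∈ fv f → y ∈ fv g →
      Disjoint ((fv f).erase x) ((fv g).erase y) →
      fv (comp f x y g) = (fv f).erase x ∪ (fv g).erase y
  A1 : ∀ f g h x y u z, x ∈ fv f → y ∈ fv g → u ∈ fv g → z ∈ fv h → y ≠ u →
      Disjoint ((fv f).erase x) ((fv g).erase y) →
      Disjoint ((fv g).erase u) ((fv h).erase z) →
      Disjoint ((fv f).erase x) ((fv h).erase z) →
      comp (comp f x y g) u z h = comp f x y (comp g u z h)
  A2 : ∀ f g h x y u z, x ∈ fv f → u ∈ fv f → x ≠ u → y ∈ fv g → z ∈ fv h →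
      Disjoint ((fv f).erase x) ((fv g).erase y) →
      Disjoint ((fv f).erase u) ((fv h).erase z) →
      Disjoint ((fv g).erase y) ((fv h).erase z) →
      comp (comp f x y g) u z h = comp (comp f u z h) x y g
  EQ : ∀ (ρ₁ ρ₂ ρ : ℕ ≃ ℕ) f g x y, x ∈ fv f → y ∈ fv g →
      Disjoint ((fv f).erase x) ((fv g).erase y) →
      Disjoint ((fv (ren ρ₁ f)).erase (ρ₁ x)) ((fv (ren ρ₂ g)).erase (ρ₂ y)) →
      (∀ v ∈ (fv f).erase x, ρ v = ρ₁ v) →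
      (∀ v ∈ (fv g).erase y, ρ v = ρ₂ v) →
      comp (ren ρ₁ f) (ρ₁ x) (ρ₂ y) (ren ρ₂ g) = ren ρ (comp f x y g)
  U1 : ∀ f x y z, x ∈ fv f → y ≠ z → y ∉ (fv f).erase x → z ∉ fv f →
      comp f x y (unit y z) = ren (Equiv.swap x z) f
  U2 : ∀ f x y z, x ∈ fv f → y ≠ z → y ∉ (fv f).erase x → z ∉ fv f →
      comp (unit y z) y x f = ren (Equiv.swap x z) f
  U3 : ∀ (ρ : ℕ ≃ ℕ) x y, x ≠ y → ren ρ (unit x y) = unit (ρ x) (ρ y)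

/-- Image of a finite set under a transposition `swap x w` with `x ∈ S`, `w ∉ S`. -/
lemma swap_image (S : Finset ℕ) {x w : ℕ} (hx : x ∈ S) (hw : w ∉ S) :
    S.image (Equiv.swap x w) = insert w (S.erase x) := by
  ext v
  simp only [Finset.mem_image, Finset.mem_insert, Finset.mem_erase]
  constructor
  · rintro ⟨u, hu, rfl⟩
    rcases eq_or_ne u x with rfl | hux
    · left; exact Equiv.swap_apply_left u w
    · rcases eq_or_ne u w with rfl | huw
      · exact absurd hu hw
      · right
        rw [Equiv.swap_apply_of_ne_of_ne hux huw]
        exact ⟨hux, hu⟩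
  · rintro (rfl | ⟨hvx, hv⟩)
    · exact ⟨x, hx, Equiv.swap_apply_left x v⟩
    · refine ⟨v, hv, ?_⟩
      exact Equiv.swap_apply_of_ne_of_ne hvx (fun h => hw (h ▸ hv))

lemma ren_swap_swap (O : CyclicOperad) (u v : ℕ) (h : O.Op) :
    O.ren (Equiv.swap u v) (O.ren (Equiv.swap u v) h) = h := by
  rw [O.ren_comp, Equiv.swap_swap, O.ren_id]

/-- Units are symmetric in their two entries. -/
lemma CyclicOperad.unit_comm (O : CyclicOperad) {p q : ℕ} (hpq : p ≠ q) :
    O.unit p q = O.unit q p := by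
  set m := max p q with hm
  set xx := m + 1 with hxx
  set aa := m + 2 with haa
  have hpm : p ≤ m := le_max_left _ _
  have hqm : q ≤ m := le_max_right _ _
  have hxq : xx ≠ q := by omega
  have hxp : xx ≠ p := by omega
  have hap : aa ≠ p := by omega
  have haq : aa ≠ q := by omega
  have hxa : xx ≠ aa := by omega
  have fvxq : O.fv (O.unit xx q) = {xx, q} := O.fv_unit _ _ hxq
  have fvap : O.fv (O.unit aa p) = {aa, p} := O.fv_unit _ _ hap
  have h1 : O.comp (O.unit xx q) xx aa (O.unit aa p)
      = O.ren (Equiv.swap xx p) (O.unit xx q) := by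
    apply O.U1
    · rw [fvxq]; simp
    · omega
    · rw [fvxq]; simp [hxa.symm, haq]
    · rw [fvxq]; simp [hxp.symm, hpq]
  have h2 : O.comp (O.unit xx q) xx aa (O.unit aa p)
      = O.ren (Equiv.swap aa q) (O.unit aa p) := by
    apply O.U2
    · rw [fvap]; simp
    · exact hxq
    · rw [fvap]; simp [hxa, hxp]
    · rw [fvap]; simp [haq.symm, Ne.symm hpq]
  have e1 : O.ren (Equiv.swap xx p) (O.unit xx q) = O.unit p q := by
    rw [O.U3 _ _ _ hxq, Equiv.swap_apply_left,
      Equiv.swap_apply_of_ne_of_ne (Ne.symm hxq) (Ne.symm hpq)]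
  have e2 : O.ren (Equiv.swap aa q) (O.unit aa p) = O.unit q p := by
    rw [O.U3 _ _ _ hap, Equiv.swap_apply_left,
      Equiv.swap_apply_of_ne_of_ne (Ne.symm hap) hpq]
  rw [← e1, ← h1, h2, e2]

/-- (Remark 1, property (CO)) In a cyclic operad with units, partial composition is
commutative: `f ∘_{x,y} g = g ∘_{y,x} f`. -/
theorem cyclicOperad_comp_comm (O : CyclicOperad) (f g : O.Op) (x y : ℕ)
    (hx : x ∈ O.fv f) (hy : y ∈ O.fv g)
    (hd : Disjoint ((O.fv f).erase x) ((O.fv g).erase y)) :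
    O.comp f x y g = O.comp g y x f := by
  classical
  set N := ((O.fv f ∪ O.fv g) ∪ {x, y}).sup id with hN
  set a := N + 1 with ha
  set t := N + 2 with ht
  set w := N + 3 with hw
  set z := N + 4 with hz
  have hbound : ∀ v ∈ (O.fv f ∪ O.fv g) ∪ ({x, y} : Finset ℕ), v ≤ N := by
    intro v hv; exact Finset.le_sup (f := id) hv
  have hbf : ∀ v ∈ O.fv f, v ≤ N := fun v hv =>
    hbound v (by simp [Finset.mem_union, hv])
  have hbg : ∀ v ∈ O.fv g, v ≤ N := fun v hv =>
    hbound v (by simp [Finset.mem_union, hv])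
  have hxN : x ≤ N := hbf x hx
  have hyN : y ≤ N := hbg y hy
  have haf : a ∉ O.fv f := fun h => by have := hbf a h; omega
  have hag : a ∉ O.fv g := fun h => by have := hbg a h; omega
  have htf : t ∉ O.fv f := fun h => by have := hbf t h; omega
  have htg : t ∉ O.fv g := fun h => by have := hbg t h; omega
  have hwf : w ∉ O.fv f := fun h => by have := hbf w h; omega
  have hwg : w ∉ O.fv g := fun h => by have := hbg w h; omega
  have hzf : z ∉ O.fv f := fun h => by have := hbf z h; omega
  have hzg : z ∉ O.fv g := fun h => by have := hbg z h; omega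
  set f' := O.ren (Equiv.swap x w) f with hf'
  set g' := O.ren (Equiv.swap y z) g with hg'
  set f'' := O.ren (Equiv.swap w t) f' with hf''
  set g'' := O.ren (Equiv.swap z a) g' with hg''
  have fvf' : O.fv f' = insert w ((O.fv f).erase x) := by
    rw [hf', O.fv_ren]; exact swap_image _ hx hwf
  have hwnotef : w ∉ (O.fv f).erase x := fun h => hwf (Finset.mem_of_mem_erase h)
  have fvg' : O.fv g' = insert z ((O.fv g).erase y) := by
    rw [hg', O.fv_ren]; exact swap_image _ hy hzg
  have hznoteg : z ∉ (O.fv g).erase y := fun h => hzg (Finset.mem_of_mem_erase h)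
  have fvf'erase : (O.fv f').erase w = (O.fv f).erase x := by
    rw [fvf', Finset.erase_insert hwnotef]
  have fvg'erase : (O.fv g').erase z = (O.fv g).erase y := by
    rw [fvg', Finset.erase_insert hznoteg]
  have hwf' : w ∈ O.fv f' := by rw [fvf']; exact Finset.mem_insert_self _ _
  have hzg' : z ∈ O.fv g' := by rw [fvg']; exact Finset.mem_insert_self _ _
  have htf' : t ∉ O.fv f' := by
    rw [fvf']; simp only [Finset.mem_insert, Finset.mem_erase]
    push_neg
    exact ⟨by omega, fun _ => htf⟩
  have fvf'' : O.fv f'' = insert t ((O.fv f).erase x) := by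
    rw [hf'', O.fv_ren, swap_image _ hwf' htf', fvf'erase]
  have htnotef : t ∉ (O.fv f).erase x := fun h => htf (Finset.mem_of_mem_erase h)
  have fvf''erase : (O.fv f'').erase t = (O.fv f).erase x := by
    rw [fvf'', Finset.erase_insert htnotef]
  have htf'' : t ∈ O.fv f'' := by rw [fvf'']; exact Finset.mem_insert_self _ _
  have hag' : a ∉ O.fv g' := by
    rw [fvg']; simp only [Finset.mem_insert, Finset.mem_erase]
    push_neg
    exact ⟨by omega, fun _ => hag⟩
  have fvg'' : O.fv g'' = insert a ((O.fv g).erase y) := by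
    rw [hg'', O.fv_ren, swap_image _ hzg' hag', fvg'erase]
  have hanoteg : a ∉ (O.fv g).erase y := fun h => hag (Finset.mem_of_mem_erase h)
  have fvg''erase : (O.fv g'').erase a = (O.fv g).erase y := by
    rw [fvg'', Finset.erase_insert hanoteg]
  have hag'' : a ∈ O.fv g'' := by rw [fvg'']; exact Finset.mem_insert_self _ _
  -- Step E1 : comp f x y g = comp f' w z g'
  have E1 : O.comp f x y g = O.comp f' w z g' := by
    have := O.EQ (Equiv.swap x w) (Equiv.swap y z) (Equiv.refl ℕ) f g x y hx hy hd
      (by rw [← hf', ← hg', Equiv.swap_apply_left, Equiv.swap_apply_left,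
            fvf'erase, fvg'erase]; exact hd)
      (fun v hv => by
        obtain ⟨hvx, hvf⟩ := Finset.mem_erase.mp hv
        rw [Equiv.refl_apply,
          Equiv.swap_apply_of_ne_of_ne hvx (by rintro rfl; exact hwf hvf)])
      (fun v hv => by
        obtain ⟨hvy, hvg⟩ := Finset.mem_erase.mp hv
        rw [Equiv.refl_apply,
          Equiv.swap_apply_of_ne_of_ne hvy (by rintro rfl; exact hzg hvg)])
    rw [← hf', ← hg', Equiv.swap_apply_left, Equiv.swap_apply_left, O.ren_id] at this
    exact this.symm
  -- Step E2 : comp g y x f = comp g' z w f'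
  have E2 : O.comp g y x f = O.comp g' z w f' := by
    have := O.EQ (Equiv.swap y z) (Equiv.swap x w) (Equiv.refl ℕ) g f y x hy hx hd.symm
      (by rw [← hf', ← hg', Equiv.swap_apply_left, Equiv.swap_apply_left,
            fvf'erase, fvg'erase]; exact hd.symm)
      (fun v hv => by
        obtain ⟨hvy, hvg⟩ := Finset.mem_erase.mp hv
        rw [Equiv.refl_apply,
          Equiv.swap_apply_of_ne_of_ne hvy (by rintro rfl; exact hzg hvg)])
      (fun v hv => by
        obtain ⟨hvx, hvf⟩ := Finset.mem_erase.mp hv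
        rw [Equiv.refl_apply,
          Equiv.swap_apply_of_ne_of_ne hvx (by rintro rfl; exact hwf hvf)])
    rw [← hf', ← hg', Equiv.swap_apply_left, Equiv.swap_apply_left, O.ren_id] at this
    exact this.symm
  have haw : a ≠ w := by omega
  have fvuaw : O.fv (O.unit a w) = {a, w} := O.fv_unit _ _ haw
  -- Step E3 : f' = comp (unit a w) a t f''
  have E3 : f' = O.comp (O.unit a w) a t f'' := by
    have hU2 : O.comp (O.unit a w) a t f'' = O.ren (Equiv.swap t w) f'' := by
      apply O.U2
      · exact htf''
      · exact haw
      · rw [fvf''erase]; exact fun h => haf (Finset.mem_of_mem_erase h)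
      · rw [fvf'']; simp only [Finset.mem_insert, Finset.mem_erase]
        push_neg
        exact ⟨by omega, fun _ => hwf⟩
    rw [hU2, hf'', Equiv.swap_comm t w, ren_swap_swap]
  -- Step E4 : reorder using A2
  have E4 : O.comp (O.comp (O.unit a w) a t f'') w z g'
      = O.comp (O.comp (O.unit a w) w z g') a t f'' := by
    apply O.A2
    · rw [fvuaw]; simp
    · rw [fvuaw]; simp
    · exact haw
    · exact htf''
    · exact hzg'
    · -- Disjoint ({a,w}.erase a) ((fv f'').erase t)
      rw [fvuaw, fvf''erase, Finset.erase_insert (by simp [haw])]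
      simp only [Finset.disjoint_left, Finset.mem_singleton]
      rintro v rfl hv
      exact hwnotef hv
    · -- Disjoint ({a,w}.erase w) ((fv g').erase z)
      rw [fvuaw, fvg'erase, Finset.pair_comm, Finset.erase_insert (by simp [haw.symm])]
      simp only [Finset.disjoint_left, Finset.mem_singleton]
      rintro v rfl hv
      exact hanoteg hv
    · rw [fvf''erase, fvg'erase]; exact hd
  -- Step E5 : comp (unit a w) w z g' = g''
  have E5 : O.comp (O.unit a w) w z g' = g'' := by
    rw [O.unit_comm haw]
    have hU2 : O.comp (O.unit w a) w z g' = O.ren (Equiv.swap z a) g' := by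
      apply O.U2
      · exact hzg'
      · exact Ne.symm haw
      · rw [fvg'erase]; exact fun h => hwg (Finset.mem_of_mem_erase h)
      · exact hag'
    rw [hU2, hg'']
  -- Step E6 : comp g' z w f' = comp g'' a t f''
  have r1 : O.ren (Equiv.swap z a) g'' = g' := by
    rw [hg'']; exact ren_swap_swap O z a g'
  have r2 : O.ren (Equiv.swap w t) f'' = f' := by
    rw [hf'']; exact ren_swap_swap O w t f'
  have E6 : O.comp g' z w f' = O.comp g'' a t f'' := by
    have := O.EQ (Equiv.swap z a) (Equiv.swap w t) (Equiv.refl ℕ) g'' f'' a t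
      hag'' htf''
      (by rw [fvg''erase, fvf''erase]; exact hd.symm)
      (by rw [r1, r2, Equiv.swap_apply_right, Equiv.swap_apply_right,
            fvg'erase, fvf'erase]; exact hd.symm)
      (fun v hv => by
        rw [fvg''erase] at hv
        obtain ⟨hvy, hvg⟩ := Finset.mem_erase.mp hv
        rw [Equiv.refl_apply,
          Equiv.swap_apply_of_ne_of_ne (by rintro rfl; exact hzg hvg)
            (by rintro rfl; exact hag hvg)])
      (fun v hv => by
        rw [fvf''erase] at hv
        obtain ⟨hvx, hvf⟩ := Finset.mem_erase.mp hv
        rw [Equiv.refl_apply,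
          Equiv.swap_apply_of_ne_of_ne (by rintro rfl; exact hwf hvf)
            (by rintro rfl; exact htf hvf)])
    rw [r1, r2, Equiv.swap_apply_right, Equiv.swap_apply_right, O.ren_id] at this
    exact this
  calc O.comp f x y g = O.comp f' w z g' := E1
    _ = O.comp (O.comp (O.unit a w) a t f'') w z g' := by rw [← E3]
    _ = O.comp (O.comp (O.unit a w) w z g') a t f'' := E4
    _ = O.comp g'' a t f'' := by rw [E5]
    _ = O.comp g' z w f' := E6.symm
    _ = O.comp g y x f := E2.symm
end

section
/- In a cyclic operad, total compositions compose: let f ∈ C(X), φ : x ↦ (g_x, x̲) with g_x ∈ C(Y_x), and ψ : y ↦ (h_y, y̲) an assignment on ⋃_{x∈X}(Y_x\{x̲}) such that the iterated total composition f(φ)(ψ) is defined. Define φ_ψ : x ↦ (g_x^{ψ_{x̲}}, x̲), where ψ_{x̲} extends ψ restricted to Y_x\{x̲} by the identity on x̲ (composing g_x with the h_y's, y ∈ Y_x\{x̲}). Then f(φ)(ψ) = f(φ_ψ). -/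
/-- The total composition `f(φ)` determined by `f` and the assignment
`φ : x ↦ (g x, b x)`, computed along an enumeration `xs` of the entries of `f`. -/
def totalComp (O : CyclicOperad) (f : O.Op) (g : ℕ → O.Op) (b : ℕ → ℕ)
    (xs : List ℕ) : O.Op :=
  xs.foldl (fun acc x => O.comp acc x (b x) (g x)) f

/-!
Induction on the entries `x :: xs` of `f`. Since total compositions can be reordered by (A2),
`ψ` may enumerate the entries of `g x` first. Compositions along disjoint entries commute, again
by (A2), so these can be carried out right after gluing `g x` to `f`, and then (A1) moves them
inside: `(f ∘_{x} g x)(ψ|_{g x}) = f ∘_{x} g x^{ψ_{x̲}}`. What remains is the claim for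
`f ∘_{x} g x^{ψ_{x̲}}` and the entries `xs`.
-/

namespace CyclicOperad

variable {O : CyclicOperad}

theorem totalComp_cons (F : O.Op) (h : ℕ → O.Op) (c : ℕ → ℕ) (y : ℕ) (l : List ℕ) :
    totalComp O F h c (y :: l) = totalComp O (O.comp F y (c y) (h y)) h c l :=
  rfl

theorem totalComp_append (F : O.Op) (h : ℕ → O.Op) (c : ℕ → ℕ) (l₁ l₂ : List ℕ) :
    totalComp O F h c (l₁ ++ l₂) = totalComp O (totalComp O F h c l₁) h c l₂ :=
  List.foldl_append

theorem totalComp_congr {h h' : ℕ → O.Op} {c c' : ℕ → ℕ} :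
    ∀ {l : List ℕ} (F : O.Op), (∀ y ∈ l, h y = h' y) → (∀ y ∈ l, c y = c' y) →
      totalComp O F h c l = totalComp O F h' c' l
  | [], _, _, _ => rfl
  | y :: l, F, hh, hc => by
    rw [totalComp_cons, totalComp_cons, hh y (by simp), hc y (by simp)]
    exact totalComp_congr _ (fun y' hy' => hh y' (by simp [hy']))
      (fun y' hy' => hc y' (by simp [hy']))

/-- `F(φ)` is defined, for the assignment `φ : y ↦ (h y, c y)` on the entries `l` of `F`. -/
structure Composable (F : O.Op) (h : ℕ → O.Op) (c : ℕ → ℕ) (l : List ℕ) : Prop where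
  nodup : l.Nodup
  mem_fv : ∀ y ∈ l, y ∈ O.fv F
  mem_fv_co : ∀ y ∈ l, c y ∈ O.fv (h y)
  pairwise : l.Pairwise fun y y' => Disjoint ((O.fv (h y)).erase (c y)) ((O.fv (h y')).erase (c y'))
  disjoint : ∀ y ∈ l, Disjoint ((O.fv (h y)).erase (c y)) ((O.fv F).erase y)

namespace Composable

variable {F : O.Op} {h : ℕ → O.Op} {c : ℕ → ℕ} {y : ℕ} {l l₁ l₂ : List ℕ}

theorem fv_comp (hF : Composable F h c (y :: l)) :
    O.fv (O.comp F y (c y) (h y)) = (O.fv F).erase y ∪ (O.fv (h y)).erase (c y) :=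
  O.fv_comp _ _ _ _ (hF.mem_fv y (by simp)) (hF.mem_fv_co y (by simp))
    (hF.disjoint y (by simp)).symm

theorem tail (hF : Composable F h c (y :: l)) : Composable (O.comp F y (c y) (h y)) h c l where
  nodup := (List.nodup_cons.mp hF.nodup).2
  mem_fv y' hy' := by
    have hne : y' ≠ y := fun e => (List.nodup_cons.mp hF.nodup).1 (e ▸ hy')
    rw [hF.fv_comp]
    exact Finset.mem_union_left _ (Finset.mem_erase.mpr ⟨hne, hF.mem_fv y' (by simp [hy'])⟩)
  mem_fv_co y' hy' := hF.mem_fv_co y' (by simp [hy'])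
  pairwise := hF.pairwise.of_cons
  disjoint y' hy' := by
    rw [hF.fv_comp, Finset.erase_union_distrib, Finset.disjoint_union_right,
      Finset.erase_right_comm]
    exact ⟨(hF.disjoint y' (by simp [hy'])).mono_right (Finset.erase_subset _ _),
      (List.rel_of_pairwise_cons hF.pairwise hy').symm.mono_right (Finset.erase_subset _ _)⟩

theorem perm (hF : Composable F h c l₁) (hp : l₁.Perm l₂) : Composable F h c l₂ where
  nodup := hp.nodup_iff.mp hF.nodup
  mem_fv y hy := hF.mem_fv y (hp.mem_iff.mpr hy)
  mem_fv_co y hy := hF.mem_fv_co y (hp.mem_iff.mpr hy)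
  pairwise := (hp.pairwise_iff fun hd => hd.symm).mp hF.pairwise
  disjoint y hy := hF.disjoint y (hp.mem_iff.mpr hy)

theorem congr {h' : ℕ → O.Op} {c' : ℕ → ℕ} (hF : Composable F h c l)
    (hh : ∀ y ∈ l, h y = h' y) (hc : ∀ y ∈ l, c y = c' y) : Composable F h' c' l where
  nodup := hF.nodup
  mem_fv := hF.mem_fv
  mem_fv_co y hy := hh y hy ▸ hc y hy ▸ hF.mem_fv_co y hy
  pairwise := hF.pairwise.imp_of_mem fun hy hy' hd => by
    rwa [← hh _ hy, ← hc _ hy, ← hh _ hy', ← hc _ hy']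
  disjoint y hy := hh y hy ▸ hc y hy ▸ hF.disjoint y hy

theorem fv_totalComp : ∀ {l : List ℕ} {F : O.Op}, Composable F h c l →
    O.fv (totalComp O F h c l)
      = (O.fv F \ l.toFinset) ∪ l.toFinset.biUnion fun y => (O.fv (h y)).erase (c y)
  | [], _, _ => by simp [totalComp]
  | y :: l, F, hF => by
    have hyl : y ∉ l := (List.nodup_cons.mp hF.nodup).1
    have hfresh : ∀ v ∈ (O.fv (h y)).erase (c y), v ∉ l := fun v hv hvl =>
      Finset.disjoint_left.mp (hF.disjoint y (by simp)) hv
        (Finset.mem_erase.mpr ⟨fun e => hyl (e ▸ hvl), hF.mem_fv v (by simp [hvl])⟩)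
    rw [totalComp_cons, fv_totalComp hF.tail, hF.fv_comp]
    ext v
    simp only [Finset.mem_union, Finset.mem_sdiff, Finset.mem_erase, List.mem_toFinset,
      Finset.mem_biUnion, List.toFinset_cons, Finset.mem_insert]
    grind

theorem fv_comp_totalComp {G f : O.Op} {x a : ℕ} (hG : Composable G h c l) (hx : x ∈ O.fv f)
    (ha : a ∈ O.fv G) (hl : ∀ v, v ∈ l ↔ v ∈ (O.fv G).erase a)
    (hhf : ∀ y ∈ l, Disjoint ((O.fv (h y)).erase (c y)) ((O.fv f).erase x)) :
    O.fv (O.comp f x a (totalComp O G h c l))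
      = (O.fv f).erase x ∪ l.toFinset.biUnion fun y => (O.fv (h y)).erase (c y) := by
  have hal : a ∉ l := fun hal => by simpa using (hl a).mp hal
  have hfv : O.fv (totalComp O G h c l)
      = insert a (l.toFinset.biUnion fun y => (O.fv (h y)).erase (c y)) := by
    rw [hG.fv_totalComp, Finset.insert_eq]
    congr 1
    ext v
    simp only [Finset.mem_sdiff, List.mem_toFinset, hl, Finset.mem_erase, Finset.mem_singleton]
    grind
  have haR : a ∉ l.toFinset.biUnion fun y => (O.fv (h y)).erase (c y) := by
    simp only [Finset.mem_biUnion, List.mem_toFinset, not_exists, not_and]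
    exact fun y hy haR => Finset.disjoint_left.mp (hG.disjoint y hy) haR
      (Finset.mem_erase.mpr ⟨fun e => hal (e ▸ hy), ha⟩)
  have herase := hfv ▸ Finset.erase_insert haR
  rw [O.fv_comp _ _ _ _ hx (hfv ▸ Finset.mem_insert_self _ _) ?_, herase]
  rw [herase, Finset.disjoint_biUnion_right]
  exact fun y hy => (hhf y (List.mem_toFinset.mp hy)).symm

theorem totalComp_perm (hF : Composable F h c l₁) (hp : l₁.Perm l₂) :
    totalComp O F h c l₁ = totalComp O F h c l₂ := by
  induction hp generalizing F with
  | nil => rfl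
  | cons y _ ih => exact ih hF.tail
  | swap x y l =>
    have hxy : y ≠ x := fun e => (List.nodup_cons.mp hF.nodup).1 (by simp [e])
    have hdxy := List.rel_of_pairwise_cons hF.pairwise (List.mem_cons_self ..)
    rw [totalComp_cons, totalComp_cons, totalComp_cons, totalComp_cons,
      O.A2 F (h y) (h x) y (c y) x (c x) (hF.mem_fv y (by simp)) (hF.mem_fv x (by simp)) hxy
        (hF.mem_fv_co y (by simp)) (hF.mem_fv_co x (by simp)) (hF.disjoint y (by simp)).symm
        (hF.disjoint x (by simp)).symm hdxy]
  | trans hp₁ _ ih₁ ih₂ => exact (ih₁ hF).trans (ih₂ (hF.perm hp₁))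

theorem totalComp_totalComp_comm {g : ℕ → O.Op} {b : ℕ → ℕ} {xs ys : List ℕ}
    (hg : Composable F g b xs) (hh : Composable F h c ys)
    (hne : ∀ x ∈ xs, ∀ y ∈ ys, x ≠ y)
    (hgh : ∀ x ∈ xs, ∀ y ∈ ys,
      Disjoint ((O.fv (g x)).erase (b x)) ((O.fv (h y)).erase (c y))) :
    totalComp O (totalComp O F g b xs) h c ys = totalComp O (totalComp O F h c ys) g b xs := by
  classical
  -- merge both assignments into one, so that `totalComp_perm` applies to `xs ++ ys`
  set k : ℕ → O.Op := fun v => if v ∈ xs then g v else h v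
  set d : ℕ → ℕ := fun v => if v ∈ xs then b v else c v
  have hkg : ∀ x ∈ xs, k x = g x := fun x hx => if_pos hx
  have hdb : ∀ x ∈ xs, d x = b x := fun x hx => if_pos hx
  have hkh : ∀ y ∈ ys, k y = h y := fun y hy => if_neg fun hx => hne y hx y hy rfl
  have hdc : ∀ y ∈ ys, d y = c y := fun y hy => if_neg fun hx => hne y hx y hy rfl
  have hg' := hg.congr (fun x hx => (hkg x hx).symm) (fun x hx => (hdb x hx).symm)
  have hh' := hh.congr (fun y hy => (hkh y hy).symm) (fun y hy => (hdc y hy).symm)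
  have hk : Composable F k d (xs ++ ys) :=
    { nodup := List.nodup_append.mpr ⟨hg.nodup, hh.nodup, hne⟩
      mem_fv := fun v hv => (List.mem_append.mp hv).elim (hg.mem_fv v) (hh.mem_fv v)
      mem_fv_co := fun v hv => (List.mem_append.mp hv).elim (hg'.mem_fv_co v) (hh'.mem_fv_co v)
      pairwise := List.pairwise_append.mpr ⟨hg'.pairwise, hh'.pairwise, fun x hx y hy => by
        rw [hkg x hx, hdb x hx, hkh y hy, hdc y hy]; exact hgh x hx y hy⟩
      disjoint := fun v hv => (List.mem_append.mp hv).elim (hg'.disjoint v) (hh'.disjoint v) }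
  calc totalComp O (totalComp O F g b xs) h c ys
      = totalComp O F k d (xs ++ ys) := by
        rw [totalComp_append, totalComp_congr _ hkg hdb, totalComp_congr _ hkh hdc]
    _ = totalComp O F k d (ys ++ xs) := hk.totalComp_perm List.perm_append_comm
    _ = totalComp O (totalComp O F h c ys) g b xs := by
        rw [totalComp_append, totalComp_congr _ hkg hdb, totalComp_congr _ hkh hdc]

theorem comp_totalComp {G f : O.Op} {x a : ℕ} (hG : Composable G h c l) (hx : x ∈ O.fv f)
    (ha : a ∈ O.fv G) (hal : a ∉ l) (hfG : Disjoint ((O.fv f).erase x) ((O.fv G).erase a))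
    (hhf : ∀ y ∈ l, Disjoint ((O.fv (h y)).erase (c y)) ((O.fv f).erase x)) :
    O.comp f x a (totalComp O G h c l) = totalComp O (O.comp f x a G) h c l := by
  induction l generalizing G with
  | nil => rfl
  | cons y l ih =>
    have hay : a ≠ y := fun e => hal (by simp [e])
    rw [totalComp_cons, totalComp_cons,
      O.A1 f G (h y) x a y (c y) hx ha (hG.mem_fv y (by simp)) (hG.mem_fv_co y (by simp)) hay
        hfG (hG.disjoint y (by simp)).symm (hhf y (by simp)).symm]
    refine ih hG.tail ?_ (fun hl => hal (by simp [hl])) ?_ (fun y' hy' => hhf y' (by simp [hy']))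
    · rw [hG.fv_comp]
      exact Finset.mem_union_left _ (Finset.mem_erase.mpr ⟨hay, ha⟩)
    · rw [hG.fv_comp, Finset.erase_union_distrib, Finset.disjoint_union_right,
        Finset.erase_right_comm]
      exact ⟨hfG.mono_right (Finset.erase_subset _ _),
        (hhf y (by simp)).symm.mono_right (Finset.erase_subset _ _)⟩

end Composable

variable {g h : ℕ → O.Op} {b c : ℕ → ℕ}

theorem Composable.disjoint_of_disjoint_erase {f : O.Op} {x x' y : ℕ} {xs : List ℕ}
    {s : Finset ℕ} (hf : Composable f g b (x :: xs)) (hx' : x' ∈ xs)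
    (hy : y ∈ (O.fv (g x)).erase (b x)) (hs : Disjoint s ((O.fv (g x')).erase y)) :
    Disjoint s ((O.fv (g x')).erase (b x')) := by
  have hy' : y ∉ (O.fv (g x')).erase (b x') :=
    Finset.disjoint_left.mp (List.rel_of_pairwise_cons hf.pairwise hx') hy
  rw [← Finset.erase_eq_of_notMem hy']
  exact hs.mono_right (Finset.erase_subset_erase _ (Finset.erase_subset _ _))

theorem totalComp_totalComp_comp {f : O.Op} {x : ℕ} {xs ys : List ℕ}
    (hf : Composable f g b (x :: xs)) (hdf : Disjoint (O.fv f) ((O.fv (g x)).erase (b x)))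
    (hG : Composable (g x) h c ys) (hys : ∀ y ∈ ys, y ∈ (O.fv (g x)).erase (b x))
    (hhf : ∀ y ∈ ys, Disjoint ((O.fv (h y)).erase (c y)) (O.fv f))
    (hhg : ∀ y ∈ ys, ∀ x' ∈ xs,
      Disjoint ((O.fv (h y)).erase (c y)) ((O.fv (g x')).erase y)) :
    totalComp O (totalComp O (O.comp f x (b x) (g x)) g b xs) h c ys
      = totalComp O (O.comp f x (b x) (totalComp O (g x) h c ys)) g b xs := by
  have hne : ∀ x' ∈ xs, ∀ y ∈ ys, x' ≠ y := fun x' hx' y hy e =>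
    Finset.disjoint_left.mp hdf (e ▸ hf.mem_fv x' (by simp [hx'])) (hys y hy)
  have hgh : ∀ x' ∈ xs, ∀ y ∈ ys,
      Disjoint ((O.fv (g x')).erase (b x')) ((O.fv (h y)).erase (c y)) := fun x' hx' y hy =>
    (hf.disjoint_of_disjoint_erase hx' (hys y hy) (hhg y hy x' hx')).symm
  have hf₁ : Composable (O.comp f x (b x) (g x)) h c ys := by
    refine ⟨hG.nodup, fun y hy => ?_, hG.mem_fv_co, hG.pairwise, fun y hy => ?_⟩
    · rw [hf.fv_comp]
      exact Finset.mem_union_right _ (hys y hy)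
    · rw [hf.fv_comp, Finset.erase_union_distrib, Finset.disjoint_union_right]
      exact ⟨(hhf y hy).mono_right ((Finset.erase_subset _ _).trans (Finset.erase_subset _ _)),
        (hG.disjoint y hy).mono_right (Finset.erase_subset_erase _ (Finset.erase_subset _ _))⟩
  rw [hf.tail.totalComp_totalComp_comm hf₁ hne hgh,
    hG.comp_totalComp (hf.mem_fv x (by simp)) (hf.mem_fv_co x (by simp))
      (fun hb => by simpa using hys _ hb) (hdf.mono_left (Finset.erase_subset _ _))
      fun y hy => (hhf y hy).mono_right (Finset.erase_subset _ _)]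

theorem Composable.composable_totalComp {f : O.Op} {xs ys : List ℕ} (hf : Composable f g b xs)
    (hynd : ys.Nodup) (hys : ∀ y ∈ ys, ∃ x ∈ xs, y ∈ (O.fv (g x)).erase (b x))
    (hc : ∀ y ∈ ys, c y ∈ O.fv (h y))
    (hhpair : ys.Pairwise
      fun y y' => Disjoint ((O.fv (h y)).erase (c y)) ((O.fv (h y')).erase (c y')))
    (hhf : ∀ y ∈ ys, Disjoint ((O.fv (h y)).erase (c y)) (O.fv f))
    (hhg : ∀ y ∈ ys, ∀ x ∈ xs, Disjoint ((O.fv (h y)).erase (c y)) ((O.fv (g x)).erase y)) :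
    Composable (totalComp O f g b xs) h c ys := by
  refine ⟨hynd, fun y hy => ?_, hc, hhpair, fun y hy => ?_⟩ <;> rw [hf.fv_totalComp]
  · obtain ⟨x, hx, hyx⟩ := hys y hy
    exact Finset.mem_union_right _ (Finset.mem_biUnion.mpr ⟨x, List.mem_toFinset.mpr hx, hyx⟩)
  · rw [Finset.erase_union_distrib, Finset.erase_biUnion, Finset.disjoint_union_right,
      Finset.disjoint_biUnion_right]
    exact ⟨(hhf y hy).mono_right ((Finset.erase_subset _ _).trans Finset.sdiff_subset),
      fun x hx => (hhg y hy x (List.mem_toFinset.mp hx)).mono_right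
        (Finset.erase_subset_erase _ (Finset.erase_subset _ _))⟩

theorem totalComp_totalComp_flatMap {ysx : ℕ → List ℕ} :
    ∀ {xs : List ℕ} {f : O.Op}, Composable f g b xs →
    (∀ x ∈ xs, Disjoint (O.fv f) ((O.fv (g x)).erase (b x))) →
    (∀ x ∈ xs, (ysx x).Nodup ∧ ∀ v, v ∈ ysx x ↔ v ∈ (O.fv (g x)).erase (b x)) →
    (∀ y ∈ xs.flatMap ysx, c y ∈ O.fv (h y)) →
    (xs.flatMap ysx).Pairwise
      (fun y y' => Disjoint ((O.fv (h y)).erase (c y)) ((O.fv (h y')).erase (c y'))) →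
    (∀ y ∈ xs.flatMap ysx, Disjoint ((O.fv (h y)).erase (c y)) (O.fv f)) →
    (∀ y ∈ xs.flatMap ysx, ∀ x ∈ xs,
      Disjoint ((O.fv (h y)).erase (c y)) ((O.fv (g x)).erase y)) →
    totalComp O (totalComp O f g b xs) h c (xs.flatMap ysx)
      = totalComp O f (fun x => totalComp O (g x) h c (ysx x)) b xs
  | [], _, _, _, _, _, _, _, _ => rfl
  | x :: xs, f, hf, hdf, hysx, hc, hhpair, hhf, hhg => by
    rw [List.flatMap_cons] at hc hhpair hhf hhg ⊢
    obtain ⟨hnd, hys⟩ := hysx x (by simp)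
    obtain ⟨hpx, hpxs, hpxxs⟩ := List.pairwise_append.mp hhpair
    set ys := ysx x
    set G := totalComp O (g x) h c ys
    have hG : Composable (g x) h c ys :=
      ⟨hnd, fun y hy => Finset.mem_of_mem_erase ((hys y).mp hy),
        fun y hy => hc y (List.mem_append_left _ hy), hpx,
        fun y hy => hhg y (List.mem_append_left _ hy) x (by simp)⟩
    have hfv : O.fv (O.comp f x (b x) G)
        = (O.fv f).erase x ∪ ys.toFinset.biUnion fun y => (O.fv (h y)).erase (c y) :=
      hG.fv_comp_totalComp (hf.mem_fv x (by simp)) (hf.mem_fv_co x (by simp)) hys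
        fun y hy => (hhf y (List.mem_append_left _ hy)).mono_right (Finset.erase_subset _ _)
    have hdf' : ∀ x' ∈ xs,
        Disjoint (O.fv (O.comp f x (b x) G)) ((O.fv (g x')).erase (b x')) := by
      intro x' hx'
      rw [hfv, Finset.disjoint_union_left, Finset.disjoint_biUnion_left]
      refine ⟨(hdf x' (by simp [hx'])).mono_left (Finset.erase_subset _ _), fun y hy => ?_⟩
      have hy := List.mem_toFinset.mp hy
      exact hf.disjoint_of_disjoint_erase hx' ((hys y).mp hy)
        (hhg y (List.mem_append_left _ hy) x' (by simp [hx']))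
    have hf' : Composable (O.comp f x (b x) G) g b xs := by
      refine ⟨hf.tail.nodup, fun x' hx' => ?_, hf.tail.mem_fv_co, hf.tail.pairwise,
        fun x' hx' => (hdf' x' hx').symm.mono_right (Finset.erase_subset _ _)⟩
      rw [hfv]
      exact Finset.mem_union_left _ (Finset.mem_erase.mpr
        ⟨fun e => (List.nodup_cons.mp hf.nodup).1 (e ▸ hx'), hf.mem_fv x' (by simp [hx'])⟩)
    have hhf' : ∀ y ∈ xs.flatMap ysx,
        Disjoint ((O.fv (h y)).erase (c y)) (O.fv (O.comp f x (b x) G)) := by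
      intro y hy
      rw [hfv, Finset.disjoint_union_right, Finset.disjoint_biUnion_right]
      exact ⟨(hhf y (List.mem_append_right _ hy)).mono_right (Finset.erase_subset _ _),
        fun y' hy' => (hpxxs y' (List.mem_toFinset.mp hy') y hy).symm⟩
    rw [totalComp_append, totalComp_cons,
      totalComp_totalComp_comp hf (hdf x (by simp)) hG (fun y hy => (hys y).mp hy)
        (fun y hy => hhf y (List.mem_append_left _ hy))
        (fun y hy x' hx' => hhg y (List.mem_append_left _ hy) x' (by simp [hx']))]
    exact totalComp_totalComp_flatMap hf' hdf' (fun x' hx' => hysx x' (by simp [hx']))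
      (fun y hy => hc y (List.mem_append_right _ hy)) hpxs hhf'
      (fun y hy x' hx' => hhg y (List.mem_append_right _ hy) x' (by simp [hx']))

end CyclicOperad

/-- (Lemma 1 (b)) Total compositions compose: `f(φ)(ψ) = f(φ_ψ)`, where
`φ : x ↦ (g x, b x)` on the entries `xs` of `f`, `ψ : y ↦ (h y, c y)` on the entries
`ys` of `f(φ)`, and `φ_ψ : x ↦ (g_x^{ψ_{x̲}}, b x)` with `g_x^{ψ_{x̲}}` the total
composition of `g x` with the restriction of `ψ` to its entries `ysx x`. -/
theorem totalComp_totalComp (O : CyclicOperad) (f : O.Op) (g : ℕ → O.Op) (b : ℕ → ℕ)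
    (h : ℕ → O.Op) (c : ℕ → ℕ) (xs ys : List ℕ) (ysx : ℕ → List ℕ)
    (hnd : xs.Nodup) (henum : xs.toFinset = O.fv f)
    (hb : ∀ x ∈ xs, b x ∈ O.fv (g x))
    (hgpair : List.Pairwise
      (fun x y => Disjoint ((O.fv (g x)).erase (b x)) ((O.fv (g y)).erase (b y))) xs)
    (hdf : ∀ x ∈ xs, Disjoint (O.fv f) ((O.fv (g x)).erase (b x)))
    (hynd : ys.Nodup)
    (hyenum : ∀ v, v ∈ ys ↔ ∃ x ∈ xs, v ∈ (O.fv (g x)).erase (b x))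
    (hysx : ∀ x ∈ xs, (ysx x).Nodup ∧ ∀ v, v ∈ ysx x ↔ v ∈ (O.fv (g x)).erase (b x))
    (hc : ∀ y ∈ ys, c y ∈ O.fv (h y))
    (hhpair : List.Pairwise
      (fun y y' => Disjoint ((O.fv (h y)).erase (c y)) ((O.fv (h y')).erase (c y'))) ys)
    (hhf : ∀ y ∈ ys, Disjoint ((O.fv (h y)).erase (c y)) (O.fv f))
    (hhg : ∀ y ∈ ys, ∀ x ∈ xs,
      Disjoint ((O.fv (h y)).erase (c y)) ((O.fv (g x)).erase y)) :
    totalComp O (totalComp O f g b xs) h c ys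
      = totalComp O f (fun x => totalComp O (g x) h c (ysx x)) b xs := by
  have hf : CyclicOperad.Composable f g b xs :=
    ⟨hnd, fun x hx => henum ▸ List.mem_toFinset.mpr hx, hb, hgpair,
      fun x hx => (hdf x hx).symm.mono_right (Finset.erase_subset _ _)⟩
  have hmem : ∀ v, v ∈ xs.flatMap ysx ↔ v ∈ ys := fun v => by
    rw [List.mem_flatMap, hyenum]
    exact exists_congr fun x => and_congr_right fun hx => (hysx x hx).2 v
  have hperm : ys.Perm (xs.flatMap ysx) := by
    refine (List.perm_ext_iff_of_nodup hynd (List.nodup_flatMap.mpr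
      ⟨fun x hx => (hysx x hx).1, hgpair.imp_of_mem fun hx hx' hd v hv hv' => ?_⟩)).mpr
      fun v => (hmem v).symm
    exact Finset.disjoint_left.mp hd (((hysx _ hx).2 v).mp hv) (((hysx _ hx').2 v).mp hv')
  have hF := hf.composable_totalComp hynd (fun y hy => (hyenum y).mp hy) hc hhpair hhf hhg
  rw [hF.totalComp_perm hperm]
  exact CyclicOperad.totalComp_totalComp_flatMap hf hdf hysx (fun y hy => hc y ((hmem y).mp hy))
    ((hperm.pairwise_iff fun hd => hd.symm).mp hhpair) (fun y hy => hhf y ((hmem y).mp hy))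
    fun y hy => hhg y ((hmem y).mp hy)
end

section
/- Pruned-subtree characterization: let T be an ordinary Vernon tree with free variables X, C a corolla of T, and v ∈ FV(C)\X with σ(v) its partner. A subtree T' of T equals the subtree P(T,C,v) obtained by the pruning algorithm (the connected component of T minus C containing σ(v)) if and only if σ(v) ∈ FV(T') and FV(T')\{σ(v)} ⊆ X. -/
/-- A family of operations (parameters) indexed by finite sets of variable names,
with a renaming action along permutations of ℕ
(corresponding to a functor `C : Bij^op → Set`). -/
structure OpFam where
  C : Finset ℕ → Type
  ren : (ρ : ℕ ≃ ℕ) → ∀ {X : Finset ℕ}, C X → C (X.image ρ)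

/-- A corolla: either an ordinary corolla `f(x₁,…,xₙ)` with `f ∈ C(X)`, or a
special corolla `(x, y)`. -/
inductive Corolla (F : OpFam) : Type
  | ord : {X : Finset ℕ} → F.C X → Corolla F
  | sp : ℕ → ℕ → Corolla F

/-- The free variables of a corolla. -/
def Corolla.fv {F : OpFam} : Corolla F → Finset ℕ
  | @Corolla.ord _ X _ => X
  | .sp x y => {x, y}

/-- A Vernon graph: a list of corollas together with an involution on variables. -/
structure EVGraph (F : OpFam) where
  cors : List (Corolla F)
  inv : ℕ → ℕ

/-- All variables occurring in a list of corollas. -/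
def varsL {F : OpFam} (cs : List (Corolla F)) : Finset ℕ :=
  cs.foldr (fun c s => c.fv ∪ s) ∅

/-- All variables of a Vernon graph. -/
def EVGraph.vars {F : OpFam} (G : EVGraph F) : Finset ℕ := varsL G.cors

/-- The free variables of a Vernon graph: the fixpoints of its involution. -/
def EVGraph.freeVars {F : OpFam} (G : EVGraph F) : Finset ℕ :=
  G.vars.filter (fun x => G.inv x = x)

/-- Adjacency of two corolla positions: they are joined by an edge of the
involution. -/
def adj {F : OpFam} (G : EVGraph F) (i j : Fin G.cors.length) : Prop :=
  i ≠ j ∧ ∃ x ∈ (G.cors.get i).fv, G.inv x ≠ x ∧ G.inv x ∈ (G.cors.get j).fv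

/-- Well-formedness of a Vernon graph as an *extended Vernon tree*: nonempty,
corollas have pairwise disjoint variables, `inv` is an involution fixing
everything outside the graph, no edge is a loop, the graph is connected, and
the number of half-edges paired by `inv` is `2·(#corollas − 1)` (so the graph
is a tree: no loops, multiple edges or cycles). -/
structure WF {F : OpFam} (G : EVGraph F) : Prop where
  nonempty : G.cors ≠ []
  disj : G.cors.Pairwise (fun c d => Disjoint c.fv d.fv)
  spOk : ∀ x y, Corolla.sp x y ∈ G.cors → x ≠ y
  invol : ∀ x, G.inv (G.inv x) = x
  fixOutside : ∀ x, x ∉ G.vars → G.inv x = x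
  closed : ∀ x ∈ G.vars, G.inv x ∈ G.vars
  noloop : ∀ c ∈ G.cors, ∀ x ∈ c.fv, G.inv x ≠ x → G.inv x ∉ c.fv
  conn : ∀ i j : Fin G.cors.length, Relation.ReflTransGen (adj G) i j
  treeCount : (G.vars.filter (fun x => G.inv x ≠ x)).card = 2 * (G.cors.length - 1)

/-- One step of the rewriting system on extended Vernon trees:
(1) contracting an edge between an ordinary corolla and a special corolla, and
(2) merging two special corollas sharing an edge; both closed under
rearrangement of the corolla lists. -/
inductive Step (F : OpFam) : EVGraph F → EVGraph F → Prop
  | contract {X : Finset ℕ} (f : F.C X) (x y z : ℕ) (rest : List (Corolla F))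
      (σ : ℕ → ℕ) (hx : x ∈ X) (hσ : σ x = y) (hz : z ∉ X) :
      Step F ⟨Corolla.ord f :: Corolla.sp y z :: rest, σ⟩
        ⟨Corolla.ord (F.ren (Equiv.swap x z) f) :: rest,
          fun v => if v = x ∨ v = y then v else σ v⟩
  | merge (x y u v : ℕ) (rest : List (Corolla F)) (σ : ℕ → ℕ) (h : σ y = u) :
      Step F ⟨Corolla.sp x y :: Corolla.sp u v :: rest, σ⟩
        ⟨Corolla.sp x v :: rest, fun w => if w = y ∨ w = u then w else σ w⟩
  | perm {cs cs' ds ds' : List (Corolla F)} {σ τ : ℕ → ℕ} :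
      cs.Perm cs' → ds.Perm ds' → Step F ⟨cs, σ⟩ ⟨ds, τ⟩ → Step F ⟨cs', σ⟩ ⟨ds', τ⟩

/-- Renaming all variables of a corolla along a permutation. -/
def Corolla.rename {F : OpFam} (ρ : ℕ ≃ ℕ) : Corolla F → Corolla F
  | .ord f => .ord (F.ren ρ f)
  | .sp x y => .sp (ρ x) (ρ y)

/-- Renaming all variables of a Vernon graph along a permutation. -/
def EVGraph.rename {F : OpFam} (ρ : ℕ ≃ ℕ) (G : EVGraph F) : EVGraph F :=
  ⟨G.cors.map (Corolla.rename ρ), fun v => ρ (G.inv (ρ.symm v))⟩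

/-- α-equivalence of Vernon graphs: a renaming fixing the free variables turns
one into the other (up to rearranging the corollas). -/
def AlphaEq {F : OpFam} (G G' : EVGraph F) : Prop :=
  ∃ ρ : ℕ ≃ ℕ, (∀ x ∈ G.freeVars, ρ x = x) ∧
    (G.rename ρ).cors.Perm G'.cors ∧ (G.rename ρ).inv = G'.inv

/-- `N` is a normal form of `G`: reachable by reductions, with no further step. -/
def IsNf {F : OpFam} (G N : EVGraph F) : Prop :=
  Relation.ReflTransGen (Step F) G N ∧ ∀ M, ¬ Step F N M

/-- The corollas generated by the pruning algorithm `P(T, C, v)`, each with its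
distinguished entry variable: the corolla adjacent to `C` along `(v, σ v)` is
generated with distinguished variable `σ v`, and from a generated pair `(D, u)`
and an internal variable `x` of `D` other than `u` we generate the adjacent
corolla with distinguished variable `σ x`. -/
inductive Pruned {F : OpFam} (G : EVGraph F) (v : ℕ) : Corolla F → ℕ → Prop
  | base : ∀ D, D ∈ G.cors → G.inv v ∈ D.fv → Pruned G v D (G.inv v)
  | step : ∀ D u x D', Pruned G v D u → x ∈ D.fv → x ≠ u →
      x ∉ G.freeVars → D' ∈ G.cors → G.inv x ∈ D'.fv → Pruned G v D' (G.inv x)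

/-- The involution induced by `G` on a sublist of its corollas: edges internal
to the sublist are kept, all other variables become fixpoints. -/
def inducedInv {F : OpFam} (G : EVGraph F) (cs : List (Corolla F)) : ℕ → ℕ :=
  fun x =>
    if x ∈ varsL cs ∧ G.inv x ∈ varsL cs ∧ G.inv x ≠ x then G.inv x else x

/-!
Double counting the paired half-edges of `T` against the edges of its corolla graph shows that
this graph is a tree without multiple edges. Rooted at `C`, the distinguished variable of every
generated corolla is the half-edge pointing towards `C`; so `C` is never generated and each
generated corolla has a unique distinguished variable. Apart from that entry, the generated set
is closed under the internal edges of `T`, so `σ v` is its only free variable not free in `T`.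
Conversely, if `σ v` is the only newly freed variable of a connected `T'`, the generation can
never leave `T'`, and connectivity of `T'` (which avoids `C`) puts every corolla of `T'` into
the generated set.
-/

open SimpleGraph Finset

lemma SimpleGraph.IsTree.eq_of_adj_of_dist_add_one {V : Type*} {G : SimpleGraph V}
    (hG : G.IsTree) {r j k₁ k₂ : V} (h₁ : G.Adj j k₁) (h₂ : G.Adj j k₂)
    (hd₁ : G.dist r k₁ + 1 = G.dist r j) (hd₂ : G.dist r k₂ + 1 = G.dist r j) : k₁ = k₂ := by
  obtain ⟨p₁, hp₁⟩ := hG.connected.exists_walk_length_eq_dist k₁ r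
  obtain ⟨p₂, hp₂⟩ := hG.connected.exists_walk_length_eq_dist k₂ r
  have hq₁ : (Walk.cons h₁ p₁).IsPath :=
    Walk.isPath_of_length_eq_dist _ (by simp [hp₁, dist_comm, ← hd₁])
  have hq₂ : (Walk.cons h₂ p₂).IsPath :=
    Walk.isPath_of_length_eq_dist _ (by simp [hp₂, dist_comm, ← hd₂])
  simpa using congrArg Walk.snd ((hG.existsUnique_path j r).unique hq₁ hq₂)

section
variable {F : OpFam}

lemma mem_varsL {cs : List (Corolla F)} {x : ℕ} : x ∈ varsL cs ↔ ∃ c ∈ cs, x ∈ c.fv := by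
  induction cs with
  | nil => simp [varsL]
  | cons c cs ih =>
    change x ∈ c.fv ∪ varsL cs ↔ _
    simp [ih]

def EVGraph.internalVars (G : EVGraph F) : Finset ℕ := G.vars.filter (fun x => G.inv x ≠ x)

def EVGraph.corGraph (G : EVGraph F) : SimpleGraph (Fin G.cors.length) :=
  SimpleGraph.fromRel (adj G)

variable {G : EVGraph F}

lemma WF.mem_vars_of_inv_ne (hWF : WF G) {x : ℕ} (hx : G.inv x ≠ x) : x ∈ G.vars := by
  by_contra h
  exact hx (hWF.fixOutside x h)

lemma WF.mem_internalVars (hWF : WF G) {x : ℕ} (hx : G.inv x ≠ x) : x ∈ G.internalVars :=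
  Finset.mem_filter.mpr ⟨hWF.mem_vars_of_inv_ne hx, hx⟩

lemma WF.index_eq_of_mem_fv (hWF : WF G) {i j : Fin G.cors.length} {x : ℕ}
    (hi : x ∈ (G.cors.get i).fv) (hj : x ∈ (G.cors.get j).fv) : i = j := by
  by_contra hne
  have hp := List.pairwise_iff_get.mp hWF.disj
  rcases lt_or_gt_of_ne hne with h | h
  · exact Finset.disjoint_left.mp (hp i j h) hi hj
  · exact Finset.disjoint_left.mp (hp j i h) hj hi

lemma WF.eq_of_mem_fv (hWF : WF G) {c d : Corolla F} {x : ℕ} (hc : c ∈ G.cors) (hd : d ∈ G.cors)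
    (hxc : x ∈ c.fv) (hxd : x ∈ d.fv) : c = d := by
  obtain ⟨i, rfl⟩ := List.mem_iff_get.mp hc
  obtain ⟨j, rfl⟩ := List.mem_iff_get.mp hd
  rw [hWF.index_eq_of_mem_fv hxc hxd]

noncomputable def WF.corIdx (hWF : WF G) (x : ℕ) : Fin G.cors.length :=
  if h : ∃ i, x ∈ (G.cors.get i).fv then h.choose
  else ⟨0, List.length_pos_iff.mpr hWF.nonempty⟩

lemma WF.mem_fv_corIdx (hWF : WF G) {x : ℕ} (hx : x ∈ G.vars) :
    x ∈ (G.cors.get (hWF.corIdx x)).fv := by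
  obtain ⟨c, hc, hxc⟩ := mem_varsL.mp hx
  obtain ⟨i, rfl⟩ := List.mem_iff_get.mp hc
  have h : ∃ i, x ∈ (G.cors.get i).fv := ⟨i, hxc⟩
  rw [WF.corIdx, dif_pos h]
  exact h.choose_spec

lemma WF.corIdx_eq (hWF : WF G) {x : ℕ} {i : Fin G.cors.length} (hx : x ∈ (G.cors.get i).fv) :
    hWF.corIdx x = i :=
  hWF.index_eq_of_mem_fv (hWF.mem_fv_corIdx (mem_varsL.mpr ⟨_, List.get_mem _ _, hx⟩)) hx

lemma WF.corIdx_eq_of_mem_fv (hWF : WF G) {D : Corolla F} {x y : ℕ} (hD : D ∈ G.cors)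
    (hx : x ∈ D.fv) (hy : y ∈ D.fv) : hWF.corIdx x = hWF.corIdx y := by
  obtain ⟨i, rfl⟩ := List.mem_iff_get.mp hD
  rw [hWF.corIdx_eq hx, hWF.corIdx_eq hy]

lemma WF.corGraph_adj (hWF : WF G) {x : ℕ} (hx : G.inv x ≠ x) :
    G.corGraph.Adj (hWF.corIdx x) (hWF.corIdx (G.inv x)) := by
  have hxv := hWF.mem_vars_of_inv_ne hx
  have hfv := hWF.mem_fv_corIdx hxv
  have hfv' := hWF.mem_fv_corIdx (hWF.closed x hxv)
  refine fromRel_adj _ _ _ |>.mpr ⟨fun h => ?_, Or.inl ⟨fun h => ?_, x, hfv, hx, hfv'⟩⟩ <;>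
    exact hWF.noloop _ (List.get_mem _ _) x hfv hx (h ▸ hfv')

lemma WF.exists_of_corGraph_adj (hWF : WF G) {i j : Fin G.cors.length} (h : G.corGraph.Adj i j) :
    ∃ x, G.inv x ≠ x ∧ hWF.corIdx x = i ∧ hWF.corIdx (G.inv x) = j := by
  rcases (fromRel_adj _ _ _).mp h |>.2 with ⟨-, x, hx, hinv, hxj⟩ | ⟨-, x, hx, hinv, hxi⟩
  · exact ⟨x, hinv, hWF.corIdx_eq hx, hWF.corIdx_eq hxj⟩
  · refine ⟨G.inv x, ?_, hWF.corIdx_eq hxi, ?_⟩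
    · rwa [hWF.invol x, ne_comm]
    · rw [hWF.invol x]
      exact hWF.corIdx_eq hx

lemma WF.corGraph_connected (hWF : WF G) : G.corGraph.Connected := by
  rw [connected_iff]
  refine ⟨fun i j => ?_, ⟨⟨0, List.length_pos_iff.mpr hWF.nonempty⟩⟩⟩
  rw [reachable_iff_reflTransGen]
  exact Relation.ReflTransGen.mono (fun a b h => (fromRel_adj _ a b).mpr ⟨h.1, Or.inl h⟩) _ _
    (hWF.conn i j)

noncomputable def WF.edgeOf (hWF : WF G) (x : ℕ) : Sym2 (Fin G.cors.length) :=
  s(hWF.corIdx x, hWF.corIdx (G.inv x))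

lemma WF.pair_subset_fiber (hWF : WF G) {x : ℕ} (hx : G.inv x ≠ x) :
    {x, G.inv x} ⊆ {y ∈ G.internalVars | hWF.edgeOf y = hWF.edgeOf x} := by
  have hx' : G.inv (G.inv x) ≠ G.inv x := by rwa [hWF.invol, ne_comm]
  intro y hy
  rcases Finset.mem_insert.mp hy with rfl | hy
  · exact Finset.mem_filter.mpr ⟨hWF.mem_internalVars hx, rfl⟩
  · rw [Finset.mem_singleton.mp hy]
    refine Finset.mem_filter.mpr ⟨hWF.mem_internalVars hx', ?_⟩
    rw [WF.edgeOf, WF.edgeOf, hWF.invol, Sym2.eq_swap]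

lemma WF.edgeOf_mem_edgeFinset (hWF : WF G) [Fintype G.corGraph.edgeSet] {x : ℕ}
    (hx : x ∈ G.internalVars) : hWF.edgeOf x ∈ G.corGraph.edgeFinset :=
  mem_edgeFinset.mpr (hWF.corGraph_adj (Finset.mem_filter.mp hx).2)

lemma WF.two_le_card_fiber_of_mem_edgeFinset (hWF : WF G) [Fintype G.corGraph.edgeSet]
    {e : Sym2 (Fin G.cors.length)} (he : e ∈ G.corGraph.edgeFinset) :
    2 ≤ #{y ∈ G.internalVars | hWF.edgeOf y = e} := by
  induction e with
  | _ i j =>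
    obtain ⟨x, hx, rfl, rfl⟩ := hWF.exists_of_corGraph_adj (mem_edgeFinset.mp he)
    exact Finset.card_pair (Ne.symm hx) ▸ Finset.card_le_card (hWF.pair_subset_fiber hx)

lemma WF.corGraph_isTree (hWF : WF G) : G.corGraph.IsTree := by
  classical
  refine isTree_iff_connected_and_card.mpr ⟨hWF.corGraph_connected, ?_⟩
  have hlow := hWF.corGraph_connected.card_vert_le_card_edgeSet_add_one
  have hup := Finset.mul_card_image_le_card_of_maps_to (fun _ => hWF.edgeOf_mem_edgeFinset) 2
    (fun _ => hWF.two_le_card_fiber_of_mem_edgeFinset)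
  have hcount : #G.internalVars = 2 * (G.cors.length - 1) := hWF.treeCount
  have hE : Nat.card G.corGraph.edgeSet = #G.corGraph.edgeFinset := by
    rw [Nat.card_eq_fintype_card, edgeFinset_card]
  rw [hE, Nat.card_fin] at hlow ⊢
  have hpos := List.length_pos_iff.mpr hWF.nonempty
  omega

lemma WF.card_fiber_eq_two (hWF : WF G) {x : ℕ} (hx : G.inv x ≠ x) :
    #{y ∈ G.internalVars | hWF.edgeOf y = hWF.edgeOf x} = 2 := by
  classical
  have hsum := Finset.card_eq_sum_card_fiberwise (fun _ => hWF.edgeOf_mem_edgeFinset)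
  have hedges := hWF.corGraph_isTree.card_edgeFinset
  have hcount : #G.internalVars = 2 * (G.cors.length - 1) := hWF.treeCount
  rw [Fintype.card_fin] at hedges
  have hall := (Finset.sum_eq_sum_iff_of_le (fun _ => hWF.two_le_card_fiber_of_mem_edgeFinset)).mp
    (by rw [← hsum, Finset.sum_const, smul_eq_mul, hcount]; omega)
  exact (hall _ (hWF.edgeOf_mem_edgeFinset (hWF.mem_internalVars hx))).symm

lemma WF.eq_of_corIdx_eq (hWF : WF G) {x y : ℕ} (hx : G.inv x ≠ x) (hy : G.inv y ≠ y)
    (h : hWF.corIdx x = hWF.corIdx y) (h' : hWF.corIdx (G.inv x) = hWF.corIdx (G.inv y)) :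
    x = y := by
  have hfiber := Finset.eq_of_subset_of_card_le (hWF.pair_subset_fiber hx)
    (by rw [hWF.card_fiber_eq_two hx, Finset.card_pair (Ne.symm hx)])
  have hy' : y ∈ ({x, G.inv x} : Finset ℕ) := hfiber ▸ Finset.mem_filter.mpr
    ⟨hWF.mem_internalVars hy, by rw [WF.edgeOf, WF.edgeOf, h, h']⟩
  rcases Finset.mem_insert.mp hy' with rfl | hy'
  · rfl
  · rw [Finset.mem_singleton.mp hy'] at h
    exact absurd h (hWF.corGraph_adj hx).ne

end

section
variable {F : OpFam} {G : EVGraph F} {v : ℕ} {D : Corolla F} {u : ℕ}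

lemma Pruned.mem_cors (hp : Pruned G v D u) : D ∈ G.cors := by
  cases hp <;> assumption

lemma Pruned.mem_fv (hp : Pruned G v D u) : u ∈ D.fv := by
  cases hp <;> assumption

lemma Pruned.inv_ne (hWF : WF G) (hv : G.inv v ≠ v) (hp : Pruned G v D u) : G.inv u ≠ u := by
  cases hp with
  | base => rwa [hWF.invol, ne_comm]
  | step D _ x _ hp hx _ hxf =>
    rw [hWF.invol, ne_comm]
    exact fun h => hxf (Finset.mem_filter.mpr ⟨mem_varsL.mpr ⟨D, hp.mem_cors, hx⟩, h⟩)

lemma Pruned.exists_inv_mem (hWF : WF G) {w : ℕ} (hp : Pruned G v D u) (hw : w ∈ D.fv)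
    (hwf : w ∉ G.freeVars) (hwv : w ≠ G.inv v) :
    ∃ D' u', Pruned G v D' u' ∧ G.inv w ∈ D'.fv := by
  by_cases hwu : w = u
  · subst hwu
    cases hp with
    | base => exact absurd rfl hwv
    | step D' u' x _ hp' hx => exact ⟨D', u', hp', by rwa [hWF.invol]⟩
  · obtain ⟨D', hD', hfv⟩ :=
      mem_varsL.mp (hWF.closed w (mem_varsL.mpr ⟨D, hp.mem_cors, hw⟩))
    exact ⟨D', _, .step D u w D' hp hw hwu hwf hD' hfv, hfv⟩

/-- The distinguished variable of a generated corolla is the half-edge pointing back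
towards `C`: along it the distance to `C` in the corolla tree drops by one. -/
lemma Pruned.dist_corIdx (hWF : WF G) (hv : G.inv v ≠ v) (hp : Pruned G v D u) :
    G.corGraph.dist (hWF.corIdx v) (hWF.corIdx (G.inv u)) + 1 =
      G.corGraph.dist (hWF.corIdx v) (hWF.corIdx u) := by
  induction hp with
  | base =>
    rw [hWF.invol, dist_self, dist_eq_one_iff_adj.mpr (hWF.corGraph_adj hv)]
  | step D u x _ hp hx hxu hxf _ _ ih =>
    have hxint : G.inv x ≠ x :=
      fun h => hxf (Finset.mem_filter.mpr ⟨mem_varsL.mpr ⟨D, hp.mem_cors, hx⟩, h⟩)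
    have hxu' : hWF.corIdx x = hWF.corIdx u := hWF.corIdx_eq_of_mem_fv hp.mem_cors hx hp.mem_fv
    rw [hWF.invol]
    rcases hWF.corGraph_isTree.dist_eq_dist_add_one_of_adj (hWF.corIdx v)
      (hWF.corGraph_adj hxint) with h | h
    · have hparent := hWF.corGraph_isTree.eq_of_adj_of_dist_add_one (hWF.corGraph_adj hxint)
        (hxu' ▸ hWF.corGraph_adj (hp.inv_ne hWF hv)) h.symm (hxu' ▸ ih)
      exact absurd (hWF.eq_of_corIdx_eq hxint (hp.inv_ne hWF hv) hxu' hparent) hxu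
    · exact h.symm

lemma not_pruned_of_mem_fv (hWF : WF G) (hv : G.inv v ≠ v) {C : Corolla F} (hC : C ∈ G.cors)
    (hvC : v ∈ C.fv) : ¬ Pruned G v C u := fun hp => by
  have h := hp.dist_corIdx hWF hv
  rw [hWF.corIdx_eq_of_mem_fv hC hp.mem_fv hvC, dist_self] at h
  omega

lemma Pruned.eq_entry (hWF : WF G) (hv : G.inv v ≠ v) {u' : ℕ} (hp : Pruned G v D u)
    (hp' : Pruned G v D u') : u = u' := by
  have huu' : hWF.corIdx u = hWF.corIdx u' :=
    hWF.corIdx_eq_of_mem_fv hp.mem_cors hp.mem_fv hp'.mem_fv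
  have hd := hp.dist_corIdx hWF hv
  rw [huu'] at hd
  have hadj := hWF.corGraph_adj (hp.inv_ne hWF hv)
  rw [huu'] at hadj
  exact hWF.eq_of_corIdx_eq (hp.inv_ne hWF hv) (hp'.inv_ne hWF hv) huu'
    (hWF.corGraph_isTree.eq_of_adj_of_dist_add_one hadj (hWF.corGraph_adj (hp'.inv_ne hWF hv))
      hd (hp'.dist_corIdx hWF hv))

end

section
variable {F : OpFam} {G : EVGraph F} {cs : List (Corolla F)} {v : ℕ}

lemma mem_freeVars_inducedInv {w : ℕ} :
    w ∈ (EVGraph.mk cs (inducedInv G cs)).freeVars ↔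
      w ∈ varsL cs ∧ (G.inv w ∈ varsL cs → G.inv w = w) := by
  rw [EVGraph.freeVars, Finset.mem_filter]
  simp only [EVGraph.vars, inducedInv]
  split_ifs <;> tauto

lemma inducedInv_eq_of_ne {x : ℕ} (h : inducedInv G cs x ≠ x) :
    inducedInv G cs x = G.inv x ∧ G.inv x ≠ x := by
  unfold inducedInv at *
  split_ifs at * <;> tauto

lemma WF.mem_of_mem_varsL (hWF : WF G) (hsub : ∀ D ∈ cs, D ∈ G.cors) {D : Corolla F} {x : ℕ}
    (hD : D ∈ G.cors) (hx : x ∈ D.fv) (hxcs : x ∈ varsL cs) : D ∈ cs := by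
  obtain ⟨E, hE, hxE⟩ := mem_varsL.mp hxcs
  exact hWF.eq_of_mem_fv (hsub E hE) hD hxE hx ▸ hE

lemma freeVars_inducedInv_of_forall_mem_iff_pruned (hWF : WF G) (hv : G.inv v ≠ v)
    {C : Corolla F} (hC : C ∈ G.cors) (hvC : v ∈ C.fv) (hsub : ∀ D ∈ cs, D ∈ G.cors)
    (hP : ∀ D, D ∈ cs ↔ ∃ u, Pruned G v D u) :
    G.inv v ∈ (EVGraph.mk cs (inducedInv G cs)).freeVars ∧
      ∀ w ∈ (EVGraph.mk cs (inducedInv G cs)).freeVars, w ≠ G.inv v → w ∈ G.freeVars := by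
  have hvcs : v ∉ varsL cs := fun h =>
    have ⟨_, hp⟩ := (hP C).mp (hWF.mem_of_mem_varsL hsub hC hvC h)
    not_pruned_of_mem_fv hWF hv hC hvC hp
  obtain ⟨D₀, hD₀, hvD₀⟩ := mem_varsL.mp (hWF.closed v (hWF.mem_vars_of_inv_ne hv))
  have hD₀cs : D₀ ∈ cs := (hP D₀).mpr ⟨_, .base D₀ hD₀ hvD₀⟩
  refine ⟨mem_freeVars_inducedInv.mpr ⟨mem_varsL.mpr ⟨D₀, hD₀cs, hvD₀⟩,
    fun h => absurd (hWF.invol v ▸ h) hvcs⟩, fun w hw hwv => ?_⟩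
  obtain ⟨hwcs, hwfix⟩ := mem_freeVars_inducedInv.mp hw
  obtain ⟨E, hE, hwE⟩ := mem_varsL.mp hwcs
  have hwG : w ∈ G.vars := mem_varsL.mpr ⟨E, hsub E hE, hwE⟩
  by_contra hwf
  obtain ⟨u, hp⟩ := (hP E).mp hE
  obtain ⟨D, _, hpD, hwD⟩ := hp.exists_inv_mem hWF hwE hwf hwv
  have hσw := hwfix (mem_varsL.mpr ⟨D, (hP D).mpr ⟨_, hpD⟩, hwD⟩)
  exact hwf (Finset.mem_filter.mpr ⟨hwG, hσw⟩)

lemma mem_of_pruned (hWF : WF G) (hv : G.inv v ≠ v) (hsub : ∀ D ∈ cs, D ∈ G.cors)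
    (hvcs : G.inv v ∈ varsL cs)
    (hfree : ∀ w ∈ (EVGraph.mk cs (inducedInv G cs)).freeVars, w ≠ G.inv v → w ∈ G.freeVars)
    {D : Corolla F} {u : ℕ} (hp : Pruned G v D u) : D ∈ cs := by
  induction hp with
  | base D hD hvD => exact hWF.mem_of_mem_varsL hsub hD hvD hvcs
  | step D u x D' hp hx hxu hxf hD' hxD' ih =>
    refine hWF.mem_of_mem_varsL hsub hD' hxD' (by_contra fun hxcs => ?_)
    have hxT : x ∈ (EVGraph.mk cs (inducedInv G cs)).freeVars :=
      mem_freeVars_inducedInv.mpr ⟨mem_varsL.mpr ⟨D, ih, hx⟩, fun h => absurd h hxcs⟩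
    have hxv : x = G.inv v := by_contra fun h => hxf (hfree x hxT h)
    exact hxu (hxv.trans ((Pruned.base D hp.mem_cors (hxv ▸ hx)).eq_entry hWF hv hp))

lemma exists_pruned_of_mem (hWF : WF G) {C : Corolla F} (hC : C ∈ G.cors) (hvC : v ∈ C.fv)
    (hsub : ∀ D ∈ cs, D ∈ G.cors) (hWT : WF (EVGraph.mk cs (inducedInv G cs))) (hCcs : C ∉ cs)
    (hvcs : G.inv v ∈ varsL cs) {D : Corolla F} (hD : D ∈ cs) : ∃ u, Pruned G v D u := by
  obtain ⟨E₀, hE₀, hvE₀⟩ := mem_varsL.mp hvcs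
  obtain ⟨i, rfl⟩ := List.mem_iff_get.mp hE₀
  obtain ⟨j, rfl⟩ := List.mem_iff_get.mp hD
  clear hD
  induction hWT.conn i j with
  | refl => exact ⟨_, .base _ (hsub _ (List.get_mem _ _)) hvE₀⟩
  | tail _ hbc ih =>
    obtain ⟨u, hu⟩ := ih
    obtain ⟨-, x, hx, hxne, hxc⟩ := hbc
    dsimp only at hx hxne hxc
    obtain ⟨hxeq, hxint⟩ := inducedInv_eq_of_ne hxne
    rw [hxeq] at hxc
    have hxv : x ≠ G.inv v := by
      rintro rfl
      rw [hWF.invol] at hxc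
      exact hCcs (hWF.eq_of_mem_fv (hsub _ (List.get_mem _ _)) hC hxc hvC ▸ List.get_mem _ _)
    obtain ⟨D, u', hp, hxD⟩ :=
      hu.exists_inv_mem hWF hx (fun h => hxint (Finset.mem_filter.mp h).2) hxv
    exact ⟨u', hWF.eq_of_mem_fv hp.mem_cors (hsub _ (List.get_mem _ _)) hxD hxc ▸ hp⟩

end

theorem pruned_characterization_general (F : OpFam) (G : EVGraph F) (hWF : WF G)
    (C : Corolla F) (hC : C ∈ G.cors) (v : ℕ) (hv : v ∈ C.fv)
    (hvint : G.inv v ≠ v)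
    (cs' : List (Corolla F)) (hsub : List.Subperm cs' G.cors)
    (T' : EVGraph F) (hT' : T' = ⟨cs', inducedInv G cs'⟩) (hWT' : WF T') :
    ((∀ D, D ∈ cs' ↔ ∃ u, Pruned G v D u) ↔
      (G.inv v ∈ T'.freeVars ∧
        ∀ w ∈ T'.freeVars, w ≠ G.inv v → w ∈ G.freeVars)) := by
  subst hT'
  have hsub' : ∀ D ∈ cs', D ∈ G.cors := fun _ hD => hsub.subset hD
  refine ⟨freeVars_inducedInv_of_forall_mem_iff_pruned hWF hvint hC hv hsub', ?_⟩
  rintro ⟨hvT, hfree⟩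
  obtain ⟨hvcs, hvfix⟩ := mem_freeVars_inducedInv.mp hvT
  have hCcs : C ∉ cs' := fun hCcs => by
    have h := hvfix (by rw [hWF.invol]; exact mem_varsL.mpr ⟨C, hCcs, hv⟩)
    rw [hWF.invol] at h
    exact hvint h.symm
  exact fun D => ⟨exists_pruned_of_mem hWF hC hv hsub' hWT' hCcs hvcs,
    fun ⟨_, hp⟩ => mem_of_pruned hWF hvint hsub' hvcs hfree hp⟩

/-- (Lemma 14) Pruned-subtree characterization: a subtree `T'` of the ordinary
Vernon tree `T` (given by a sub-collection `cs'` of its corollas with the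
induced involution) equals the output `P(T, C, v)` of the pruning algorithm if
and only if `σ v` is free in `T'` and every other free variable of `T'` is free
in `T`. -/
theorem pruned_characterization (F : OpFam) (G : EVGraph F) (hWF : WF G)
    (hord : ∀ c ∈ G.cors, ∃ (X : Finset ℕ) (f : F.C X), c = Corolla.ord (X := X) f)
    (C : Corolla F) (hC : C ∈ G.cors) (v : ℕ) (hv : v ∈ C.fv)
    (hvint : G.inv v ≠ v)
    (cs' : List (Corolla F)) (hsub : List.Subperm cs' G.cors) (hne : cs' ≠ [])
    (T' : EVGraph F) (hT' : T' = ⟨cs', inducedInv G cs'⟩) (hWT' : WF T') :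
    ((∀ D, D ∈ cs' ↔ ∃ u, Pruned G v D u) ↔
      (G.inv v ∈ T'.freeVars ∧
        ∀ w ∈ T'.freeVars, w ≠ G.inv v → w ∈ G.freeVars)) :=
  pruned_characterization_general F G hWF C hC v hv hvint cs' hsub T' hT' hWT'
end
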